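/- Let A, B be n×n positive semidefinite complex matrices and let t ∈ [1/4, 3/4]. Then ‖A^t B^(1-t) + B^t A^(1-t)‖_F ≤ ‖A + B‖_F, where ‖·‖_F is the Frobenius norm. -/

import Mathlib

open scoped ComplexOrder

/-- The real power `A ^ r` of a (positive semidefinite) matrix, defined via the
continuous functional calculus (equivalently, via the spectral decomposition). -/
noncomputable def matRpow {n : ℕ} (A : Matrix (Fin n) (Fin n) ℂ) (r : ℝ) :
    Matrix (Fin n) (Fin n) ℂ :=
  cfc (fun x : ℝ => x ^ r) A

/-- The Frobenius (Hilbert–Schmidt) norm `‖M‖_F = (∑_{i,j} |M_{ij}|²)^{1/2}`. -/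
noncomputable def frobeniusNorm' {n : ℕ} (M : Matrix (Fin n) (Fin n) ℂ) : ℝ :=
  Real.sqrt (∑ i, ∑ j, ‖M i j‖ ^ 2)

/-!
Diagonalize `A = U diag(a) U*`, `B = V diag(b) V*` and put `W = U* V`. Unitary invariance of the
Frobenius norm turns `A^t B^(1-t)`, `A^(1-t) B^t` (the adjoint of `B^t A^(1-t)`) and `A + B` into
the matrices with entries `a_i^t b_j^(1-t) W_ij`, `a_i^(1-t) b_j^t W_ij` and `(a_i + b_j) W_ij`.
After the triangle inequality and `(‖M‖ + ‖N‖)² ≤ 2 (‖M‖² + ‖N‖²)` it therefore suffices to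
compare entries, i.e. to prove `2 (x^(2t) y^(2-2t) + x^(2-2t) y^(2t)) ≤ (x + y)²` for `x, y ≥ 0`.
Writing `x^(2t) y^(2-2t) = √(xy) x^p y^q` with `p = 2t - 1/2`, `q = 3/2 - 2t`, which are convex
weights exactly when `t ∈ [1/4, 3/4]`, weighted AM-GM bounds the left side by
`2 √(xy) (x + y) ≤ (x + y)²`.
-/

open scoped Matrix.Norms.Frobenius
open Matrix

namespace Real

lemma rpow_mul_rpow_add_rpow_mul_rpow_le {x y p q : ℝ} (hx : 0 ≤ x) (hy : 0 ≤ y)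
    (hp : 0 ≤ p) (hq : 0 ≤ q) (hpq : p + q = 1) :
    x ^ p * y ^ q + x ^ q * y ^ p ≤ x + y := by
  have h₁ := geom_mean_le_arith_mean2_weighted hp hq hx hy hpq
  have h₂ := geom_mean_le_arith_mean2_weighted hq hp hx hy (by linarith)
  linear_combination h₁ + h₂ + (x + y) * hpq

lemma rpow_sq_eq_sqrt_mul_rpow {z s : ℝ} (hz : 0 ≤ z) (hs : 1 / 4 ≤ s) :
    (z ^ s) ^ 2 = z ^ (1 / 2 : ℝ) * z ^ (2 * s - 1 / 2) := by
  rw [← rpow_mul_natCast hz, ← rpow_add' hz (by linarith)]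
  ring_nf

lemma two_mul_heinz_sq_le {x y t : ℝ} (hx : 0 ≤ x) (hy : 0 ≤ y)
    (ht₁ : 1 / 4 ≤ t) (ht₂ : t ≤ 3 / 4) :
    2 * ((x ^ t * y ^ (1 - t)) ^ 2 + (x ^ (1 - t) * y ^ t) ^ 2) ≤ (x + y) ^ 2 := by
  have hmix := rpow_mul_rpow_add_rpow_mul_rpow_le hx hy (p := 2 * t - 1 / 2)
    (q := 2 * (1 - t) - 1 / 2) (by linarith) (by linarith) (by ring)
  have hamgm := geom_mean_le_arith_mean2_weighted (w₁ := 1 / 2) (w₂ := 1 / 2)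
    (by norm_num) (by norm_num) hx hy (by norm_num)
  have hg : 0 ≤ x ^ (1 / 2 : ℝ) * y ^ (1 / 2 : ℝ) := by positivity
  rw [mul_pow, mul_pow, rpow_sq_eq_sqrt_mul_rpow hx ht₁,
    rpow_sq_eq_sqrt_mul_rpow hy (by linarith), rpow_sq_eq_sqrt_mul_rpow hx (by linarith),
    rpow_sq_eq_sqrt_mul_rpow hy ht₁]
  nlinarith [mul_le_mul_of_nonneg_left hmix hg]

end Real

namespace Matrix

variable {m n α : Type*} [Fintype m] [Fintype n]

lemma frobenius_norm_sq [SeminormedAddCommGroup α] (M : Matrix m n α) :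
    ‖M‖ ^ 2 = ∑ i, ∑ j, ‖M i j‖ ^ 2 := by
  rw [frobenius_norm_def, ← Real.rpow_natCast, ← Real.rpow_mul (by positivity)]
  norm_num

lemma frobenius_norm_add_le_of_entrywise [SeminormedAddCommGroup α] {X Y Z : Matrix m n α}
    (h : ∀ i j, 2 * (‖X i j‖ ^ 2 + ‖Y i j‖ ^ 2) ≤ ‖Z i j‖ ^ 2) : ‖X‖ + ‖Y‖ ≤ ‖Z‖ := by
  have hsum : 2 * (‖X‖ ^ 2 + ‖Y‖ ^ 2) ≤ ‖Z‖ ^ 2 := by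
    simp only [frobenius_norm_sq, mul_add, Finset.mul_sum, ← Finset.sum_add_distrib]
    exact Finset.sum_le_sum fun i _ ↦ Finset.sum_le_sum fun j _ ↦ by linarith [h i j]
  nlinarith [sq_nonneg (‖X‖ - ‖Y‖), norm_nonneg Z, norm_nonneg X, norm_nonneg Y]

variable {𝕜 : Type*} [RCLike 𝕜]

lemma frobenius_norm_sq_eq_trace (M : Matrix m n 𝕜) :
    ((‖M‖ ^ 2 : ℝ) : 𝕜) = trace (Mᴴ * M) := by
  simp only [frobenius_norm_sq, trace, diag, mul_apply, conjTranspose_apply]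
  rw [Finset.sum_comm]
  push_cast
  simp [RCLike.conj_mul]

lemma frobenius_norm_unitary_mul [DecidableEq m] {U : Matrix m m 𝕜} (hU : U ∈ unitaryGroup m 𝕜)
    (M : Matrix m n 𝕜) : ‖U * M‖ = ‖M‖ := by
  have h : ((‖U * M‖ ^ 2 : ℝ) : 𝕜) = ((‖M‖ ^ 2 : ℝ) : 𝕜) := by
    rw [frobenius_norm_sq_eq_trace, frobenius_norm_sq_eq_trace, conjTranspose_mul,
      Matrix.mul_assoc, ← Matrix.mul_assoc Uᴴ, ← star_eq_conjTranspose,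
      (mem_unitaryGroup_iff').mp hU, Matrix.one_mul]
  exact (sq_eq_sq₀ (norm_nonneg _) (norm_nonneg _)).mp (by exact_mod_cast h)

lemma frobenius_norm_mul_unitary [DecidableEq n] {U : Matrix n n 𝕜} (hU : U ∈ unitaryGroup n 𝕜)
    (M : Matrix m n 𝕜) : ‖M * U‖ = ‖M‖ := by
  rw [← frobenius_norm_conjTranspose, conjTranspose_mul, ← star_eq_conjTranspose,
    frobenius_norm_unitary_mul (Unitary.star_mem hU), frobenius_norm_conjTranspose]

lemma frobenius_norm_mul_comm_of_isHermitian {X Y : Matrix n n 𝕜} (hX : X.IsHermitian)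
    (hY : Y.IsHermitian) : ‖X * Y‖ = ‖Y * X‖ := by
  rw [← frobenius_norm_conjTranspose, conjTranspose_mul, hX.eq, hY.eq]

section UnitaryConj

variable [DecidableEq n] {U V : Matrix n n 𝕜} (hU : U ∈ unitaryGroup n 𝕜)
  (hV : V ∈ unitaryGroup n 𝕜)
include hU hV

lemma frobenius_norm_conj_mul_conj (X Y : Matrix n n 𝕜) :
    ‖U * X * star U * (V * Y * star V)‖ = ‖X * (star U * V) * Y‖ := by
  rw [show U * X * star U * (V * Y * star V) = U * (X * (star U * V) * Y) * star V by
      simp only [Matrix.mul_assoc],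
    frobenius_norm_mul_unitary (Unitary.star_mem hV), frobenius_norm_unitary_mul hU]

lemma frobenius_norm_conj_add_conj (X Y : Matrix n n 𝕜) :
    ‖U * X * star U + V * Y * star V‖ = ‖X * (star U * V) + (star U * V) * Y‖ := by
  have hV' : V * star V = 1 := (mem_unitaryGroup_iff).mp hV
  have hU' : U * star U = 1 := (mem_unitaryGroup_iff).mp hU
  rw [show U * X * star U + V * Y * star V = U * (X * (star U * V) + (star U * V) * Y) * star V by
      simp only [Matrix.mul_add, Matrix.add_mul, ← Matrix.mul_assoc, hU', Matrix.one_mul]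
      simp only [Matrix.mul_assoc, hV', Matrix.mul_one],
    frobenius_norm_mul_unitary (Unitary.star_mem hV), frobenius_norm_unitary_mul hU]

end UnitaryConj

namespace IsHermitian

variable [DecidableEq n] {A B : Matrix n n 𝕜} (hA : A.IsHermitian) (hB : B.IsHermitian)

lemma cfc_eq_conj_diagonal (f : ℝ → ℝ) :
    cfc f A = (hA.eigenvectorUnitary : Matrix n n 𝕜) *
      diagonal (RCLike.ofReal ∘ f ∘ hA.eigenvalues) *
      star (hA.eigenvectorUnitary : Matrix n n 𝕜) := by
  rw [hA.cfc_eq, IsHermitian.cfc, Unitary.conjStarAlgAut_apply]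

noncomputable abbrev eigenbasisOverlap : Matrix n n 𝕜 :=
  star (hA.eigenvectorUnitary : Matrix n n 𝕜) * hB.eigenvectorUnitary

lemma frobenius_norm_cfc_mul_cfc (f g : ℝ → ℝ) :
    ‖cfc f A * cfc g B‖ = ‖diagonal (RCLike.ofReal ∘ f ∘ hA.eigenvalues) *
      eigenbasisOverlap hA hB * diagonal (RCLike.ofReal ∘ g ∘ hB.eigenvalues)‖ := by
  rw [cfc_eq_conj_diagonal hA, cfc_eq_conj_diagonal hB,
    frobenius_norm_conj_mul_conj hA.eigenvectorUnitary.2 hB.eigenvectorUnitary.2]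

lemma frobenius_norm_add_eq :
    ‖A + B‖ = ‖diagonal (RCLike.ofReal ∘ hA.eigenvalues) * eigenbasisOverlap hA hB +
      eigenbasisOverlap hA hB * diagonal (RCLike.ofReal ∘ hB.eigenvalues)‖ := by
  conv_lhs => rw [hA.spectral_theorem, hB.spectral_theorem]
  rw [Unitary.conjStarAlgAut_apply, Unitary.conjStarAlgAut_apply,
    frobenius_norm_conj_add_conj hA.eigenvectorUnitary.2 hB.eigenvectorUnitary.2]

end IsHermitian

end Matrix

lemma RCLike.two_mul_heinz_entry_sq_le {𝕜 : Type*} [RCLike 𝕜] {x y t : ℝ} (hx : 0 ≤ x)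
    (hy : 0 ≤ y) (ht₁ : 1 / 4 ≤ t) (ht₂ : t ≤ 3 / 4) (w : 𝕜) :
    2 * (‖((x ^ t : ℝ) : 𝕜) * w * ((y ^ (1 - t) : ℝ) : 𝕜)‖ ^ 2 +
        ‖((x ^ (1 - t) : ℝ) : 𝕜) * w * ((y ^ t : ℝ) : 𝕜)‖ ^ 2)
      ≤ ‖(x : 𝕜) * w + w * (y : 𝕜)‖ ^ 2 := by
  have h := mul_le_mul_of_nonneg_right (Real.two_mul_heinz_sq_le hx hy ht₁ ht₂)
    (sq_nonneg ‖w‖)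
  rw [show (x : 𝕜) * w + w * y = ((x + y : ℝ) : 𝕜) * w by push_cast; ring]
  simp only [norm_mul, RCLike.norm_ofReal, abs_of_nonneg (Real.rpow_nonneg hx _),
    abs_of_nonneg (Real.rpow_nonneg hy _), abs_of_nonneg (add_nonneg hx hy)]
  linear_combination h

lemma frobeniusNorm'_eq_norm {n : ℕ} (M : Matrix (Fin n) (Fin n) ℂ) :
    frobeniusNorm' M = ‖M‖ := by
  rw [frobeniusNorm', Real.sqrt_eq_iff_eq_sq (by positivity) (norm_nonneg _), frobenius_norm_sq]

/-- **Bourin-type bound with sharp constant 1, Frobenius-norm case.**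
For `n×n` positive semidefinite complex matrices `A, B` and `t ∈ [1/4, 3/4]`,
`‖A^t B^(1-t) + B^t A^(1-t)‖_F ≤ ‖A + B‖_F`. -/
theorem crossed_heinz_central_range_frobenius {n : ℕ} (A B : Matrix (Fin n) (Fin n) ℂ)
    (hA : A.PosSemidef) (hB : B.PosSemidef) (t : ℝ)
    (ht : t ∈ Set.Icc (1 / 4 : ℝ) (3 / 4)) :
    frobeniusNorm' (matRpow A t * matRpow B (1 - t) + matRpow B t * matRpow A (1 - t)) ≤
      frobeniusNorm' (A + B) := by
  obtain ⟨ht₁, ht₂⟩ := ht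
  simp only [frobeniusNorm'_eq_norm, matRpow]
  calc _ ≤ ‖cfc (· ^ t) A * cfc (· ^ (1 - t)) B‖ + ‖cfc (· ^ t) B * cfc (· ^ (1 - t)) A‖ :=
        norm_add_le _ _
    _ = ‖cfc (· ^ t) A * cfc (· ^ (1 - t)) B‖ + ‖cfc (· ^ (1 - t)) A * cfc (· ^ t) B‖ := by
        rw [frobenius_norm_mul_comm_of_isHermitian
          (cfc_predicate (· ^ t) B : IsSelfAdjoint _).isHermitian
          (cfc_predicate (· ^ (1 - t)) A : IsSelfAdjoint _).isHermitian]
    _ ≤ ‖A + B‖ := by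
        rw [hA.1.frobenius_norm_cfc_mul_cfc hB.1, hA.1.frobenius_norm_cfc_mul_cfc hB.1,
          hA.1.frobenius_norm_add_eq hB.1]
        refine frobenius_norm_add_le_of_entrywise fun i j ↦ ?_
        simp only [Matrix.add_apply, diagonal_mul, mul_diagonal, Function.comp_apply]
        exact RCLike.two_mul_heinz_entry_sq_le
          (hA.eigenvalues_nonneg i) (hB.eigenvalues_nonneg j) ht₁ ht₂ _
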